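/- Let A be an n×n matrix over a commutative ring whose rows each sum to zero. Then all principal (n−1)×(n−1) minors of A obtained by deleting the i-th row and i-th column, for varying i, are equal whenever the columns of A also each sum to zero. -/

import Mathlib

/-!
The principal minor at `i` is the diagonal cofactor `adjugate A i i`. The entry
`adjugate A i j` is `det A` with row `j` replaced by `eᵢ`, so the difference of two entries
in the same column is the determinant of a matrix all of whose rows sum to zero; such a matrix
kills the all-ones vector, so its determinant vanishes (multiply by the adjugate). Hence zero
row sums make `adjugate A i j` independent of `i`, and dually zero column sums make it
independent of `j`.
-/

open Finset Matrix

namespace Matrix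

variable {m R : Type*} [Fintype m] [DecidableEq m] [CommRing R]

theorem det_eq_zero_of_row_sums_eq_zero [Nonempty m] {M : Matrix m m R}
    (h : ∀ i, ∑ j, M i j = 0) : M.det = 0 := by
  have hv : M *ᵥ (fun _ => 1) = 0 := funext fun i => by simpa [mulVec, dotProduct] using h i
  exact det_eq_zero_of_mulVec_eq_zero_of_mem_nonZeroDivisors hv (i := Classical.arbitrary m)
    (one_mem _)

theorem adjugate_apply_eq_of_row_sums_eq_zero {A : Matrix m m R} (h : ∀ k, ∑ l, A k l = 0)
    (i i' j : m) : adjugate A i j = adjugate A i' j := by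
  have : Nonempty m := ⟨j⟩
  have hz : (A.updateRow j (Pi.single i 1 - Pi.single i' 1)).det = 0 := by
    refine det_eq_zero_of_row_sums_eq_zero fun k => ?_
    rcases eq_or_ne k j with rfl | hk
    · simp [sum_sub_distrib]
    · simpa [updateRow_ne hk] using h k
  rw [adjugate_apply, adjugate_apply, ← sub_add_cancel (Pi.single i 1 : m → R) (Pi.single i' 1),
    det_updateRow_add, hz, zero_add]

theorem adjugate_apply_eq_of_col_sums_eq_zero {A : Matrix m m R} (h : ∀ l, ∑ k, A k l = 0)
    (i j j' : m) : adjugate A i j = adjugate A i j' := by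
  simpa [← adjugate_transpose] using
    adjugate_apply_eq_of_row_sums_eq_zero (A := Aᵀ) (by simpa using h) j j' i

theorem det_submatrix_succAbove_self_eq_adjugate {n : ℕ} (A : Matrix (Fin (n + 1)) (Fin (n + 1)) R)
    (i : Fin (n + 1)) : (A.submatrix i.succAbove i.succAbove).det = adjugate A i i := by
  rw [adjugate_fin_succ_eq_det_submatrix, Even.neg_one_pow ⟨i, rfl⟩, one_mul]

end Matrix

/-- If every row and every column of a square matrix `A` sums to zero, then all
principal minors of `A` obtained by deleting the `i`-th row and `i`-th column
are equal, independently of `i`. -/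
theorem principal_minors_equal {n : ℕ} {R : Type*} [CommRing R]
    (A : Matrix (Fin (n + 1)) (Fin (n + 1)) R)
    (hrow : ∀ i, ∑ j, A i j = 0) (hcol : ∀ j, ∑ i, A i j = 0) :
    ∀ i j : Fin (n + 1),
      (A.submatrix i.succAbove i.succAbove).det
        = (A.submatrix j.succAbove j.succAbove).det := by
  intro i j
  rw [det_submatrix_succAbove_self_eq_adjugate, det_submatrix_succAbove_self_eq_adjugate]
  calc adjugate A i i = adjugate A j i := adjugate_apply_eq_of_row_sums_eq_zero hrow i j i
    _ = adjugate A j j := adjugate_apply_eq_of_col_sums_eq_zero hcol j i j
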